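/- Let E ⊂ ℝ^n be compact and fix x ∈ E^c. Let s_{[0]} be the side length of a Whitney cube (with respect to the standard origin) containing x. Then the map b ↦ 𝓔_{m,[b]}(f)(x) is periodic with period 16·s_{[0]}: if b − b' ∈ 16 s_{[0]} ℤ^n, then the Whitney cubes Q (with respect to origin b) satisfying x ∈ Q^* coincide with those with respect to origin b', and hence 𝓔_{m,[b]}(f)(x) = 𝓔_{m,[b']}(f)(x). -/

import Mathlib

/-- The closed axis-parallel cube with lower corner `b` and side length `s`. -/
def cube {n : ℕ} (b : Fin n → ℝ) (s : ℝ) : Set (Fin n → ℝ) :=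
  {x | ∀ i, b i ≤ x i ∧ x i ≤ b i + s}

/-- The concentric dilate `Q^*` with side length `(1+2t)s`. -/
def cubeStar {n : ℕ} (t : ℝ) (b : Fin n → ℝ) (s : ℝ) : Set (Fin n → ℝ) :=
  {x | ∀ i, |x i - (b i + s / 2)| ≤ (1 + 2 * t) * s / 2}

/-- The Euclidean distance on `Fin n → ℝ`. -/
noncomputable def edist2 {n : ℕ} (x y : Fin n → ℝ) : ℝ :=
  Real.sqrt (∑ i, (x i - y i) ^ 2)

/-- The (Euclidean) distance between two sets. -/
noncomputable def setDist2 {n : ℕ} (A B : Set (Fin n → ℝ)) : ℝ :=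
  sInf {d | ∃ a ∈ A, ∃ b ∈ B, d = edist2 a b}

/-- A cube is dyadic with respect to the origin `o` if its side is a power of `2`
and its corner lies in `o + s·ℤⁿ`. -/
def IsDyadicAt {n : ℕ} (o b : Fin n → ℝ) (s : ℝ) : Prop :=
  (∃ j : ℤ, s = 2 ^ j) ∧ ∀ i, ∃ z : ℤ, b i - o i = z * s

/-- The corner of the dyadic parent (with respect to origin `o`) of the dyadic cube
with corner `b` and side `s`. -/
noncomputable def parentCorner {n : ℕ} (o b : Fin n → ℝ) (s : ℝ) : Fin n → ℝ :=
  fun i => o i + 2 * s * ⌊(b i - o i) / (2 * s)⌋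

/-- A Whitney cube for `Eᶜ` with respect to origin `o`: a dyadic cube `q = (b, s)`
with `diam Q ≤ dist(Q, E)`, maximal in the sense that its dyadic parent fails
this condition. -/
noncomputable def IsWhitneyAt {n : ℕ} (E : Set (Fin n → ℝ)) (o : Fin n → ℝ)
    (q : (Fin n → ℝ) × ℝ) : Prop :=
  IsDyadicAt o q.1 q.2 ∧
  q.2 * Real.sqrt n ≤ setDist2 (cube q.1 q.2) E ∧
  setDist2 (cube (parentCorner o q.1 q.2) (2 * q.2)) E < 2 * q.2 * Real.sqrt n

/-- The cutoff function of the cube with corner `b` and side `s`. -/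
noncomputable def phiC {n : ℕ} (ϑ : ℝ → ℝ) (b : Fin n → ℝ) (s : ℝ)
    (y : Fin n → ℝ) : ℝ :=
  ∏ i, ϑ ((y i - b i) / s)

/-- The polynomial `P_y` of a Whitney field `W`, evaluated at `x`. -/
noncomputable def PW {n : ℕ} (m : ℕ) (W : (Fin n → ℝ) → (Fin n → ℕ) → ℝ)
    (y x : Fin n → ℝ) : ℝ :=
  ∑ r ∈ Finset.range (m+1), ∑ α ∈ Finset.Nat.antidiagonalTuple n r,
    W y α * (∏ i, (x i - y i) ^ (α i)) / ∏ i, (Nat.factorial (α i) : ℝ)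

/-- The value of the Whitney extension `𝓔_{m,[o]}(f)` at `x`, built from the Whitney
cubes with respect to origin `o`, a choice `pt` of nearest points, and cutoffs. -/
noncomputable def extVal {n : ℕ} (m : ℕ) (E : Set (Fin n → ℝ)) (t : ℝ) (ϑ : ℝ → ℝ)
    (W : (Fin n → ℝ) → (Fin n → ℕ) → ℝ) (pt : (Fin n → ℝ) × ℝ → Fin n → ℝ)
    (o x : Fin n → ℝ) : ℝ :=
  ∑ᶠ q ∈ {q : (Fin n → ℝ) × ℝ | IsWhitneyAt E o q ∧ setDist2 (cube q.1 q.2) E ≤ 1},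
    PW m W (pt q) x *
      (phiC ϑ q.1 q.2 x /
        ∑ᶠ q' ∈ {q' : (Fin n → ℝ) × ℝ | IsWhitneyAt E o q'}, phiC ϑ q'.1 q'.2 x)


section helpers

open Set

variable {n : ℕ}

lemma edist2_eq_dist (x y : Fin n → ℝ) :
    edist2 x y = dist ((WithLp.equiv 2 (Fin n → ℝ)).symm x)
      ((WithLp.equiv 2 (Fin n → ℝ)).symm y) := by
  rw [EuclideanSpace.dist_eq]
  simp [edist2, Real.dist_eq, sq_abs]

lemma edist2_nonneg (x y : Fin n → ℝ) : 0 ≤ edist2 x y := Real.sqrt_nonneg _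

lemma edist2_comm (x y : Fin n → ℝ) : edist2 x y = edist2 y x := by
  unfold edist2; congr 1; exact Finset.sum_congr rfl fun i _ => by ring

lemma edist2_triangle (x y z : Fin n → ℝ) :
    edist2 x z ≤ edist2 x y + edist2 y z := by
  rw [edist2_eq_dist, edist2_eq_dist, edist2_eq_dist]
  exact dist_triangle _ _ _

lemma edist2_le_coord {x y : Fin n → ℝ} {c : ℝ} (hc : 0 ≤ c)
    (h : ∀ i, |x i - y i| ≤ c) : edist2 x y ≤ c * Real.sqrt n := by
  have h1 : ∑ i, (x i - y i) ^ 2 ≤ ∑ _i : Fin n, c ^ 2 := by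
    refine Finset.sum_le_sum fun i _ => sq_le_sq' ?_ ?_
    · linarith [(abs_le.1 (h i)).1]
    · exact (abs_le.1 (h i)).2
  calc edist2 x y ≤ Real.sqrt (∑ _i : Fin n, c ^ 2) := Real.sqrt_le_sqrt h1
    _ = c * Real.sqrt n := by
        rw [Finset.sum_const, Finset.card_univ, Fintype.card_fin, nsmul_eq_mul,
          Real.sqrt_mul (by positivity), Real.sqrt_sq hc, mul_comm]

lemma setDist2_le {A B : Set (Fin n → ℝ)} {a e : Fin n → ℝ}
    (ha : a ∈ A) (he : e ∈ B) : setDist2 A B ≤ edist2 a e := by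
  refine csInf_le ⟨0, ?_⟩ ⟨a, ha, e, he, rfl⟩
  rintro d ⟨u, _, v, _, rfl⟩; exact edist2_nonneg u v

lemma le_setDist2 {A B : Set (Fin n → ℝ)} {c : ℝ}
    (hA : A.Nonempty) (hB : B.Nonempty)
    (h : ∀ a ∈ A, ∀ e ∈ B, c ≤ edist2 a e) : c ≤ setDist2 A B := by
  obtain ⟨a, ha⟩ := hA; obtain ⟨e, he⟩ := hB
  have hne : edist2 a e ∈ {d | ∃ u ∈ A, ∃ v ∈ B, d = edist2 u v} :=
    ⟨a, ha, e, he, rfl⟩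
  refine le_csInf ⟨_, hne⟩ ?_
  rintro d ⟨u, hu, v, hv, rfl⟩; exact h u hu v hv

lemma exists_of_setDist2_lt {A B : Set (Fin n → ℝ)} {c : ℝ}
    (hA : A.Nonempty) (hB : B.Nonempty) (h : setDist2 A B < c) :
    ∃ a ∈ A, ∃ e ∈ B, edist2 a e < c := by
  obtain ⟨a, ha⟩ := hA; obtain ⟨e, he⟩ := hB
  have hne : edist2 a e ∈ {d | ∃ u ∈ A, ∃ v ∈ B, d = edist2 u v} :=
    ⟨a, ha, e, he, rfl⟩
  obtain ⟨d, ⟨u, hu, v, hv, rfl⟩, hdc⟩ :=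
    exists_lt_of_csInf_lt ⟨_, hne⟩ h
  exact ⟨u, hu, v, hv, hdc⟩

lemma edist2_le_of_mem_cube {c : Fin n → ℝ} {s : ℝ} (hs : 0 ≤ s)
    {u v : Fin n → ℝ} (hu : u ∈ cube c s) (hv : v ∈ cube c s) :
    edist2 u v ≤ s * Real.sqrt n := by
  refine edist2_le_coord hs fun i => ?_
  have h1 := hu i; have h2 := hv i
  rw [abs_le]; constructor <;> [linarith [h1.1, h2.2]; linarith [h1.2, h2.1]]

lemma cube_subset_parent (o : Fin n → ℝ) {c : Fin n → ℝ} {s : ℝ} (hs : 0 < s)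
    (hd : ∀ i, ∃ z : ℤ, c i - o i = z * s) :
    cube c s ⊆ cube (parentCorner o c s) (2 * s) := by
  intro u hu i
  obtain ⟨z, hz⟩ := hd i
  have h2s : (0:ℝ) < 2 * s := by linarith
  set y := (c i - o i) / (2 * s) with hy
  have hyz : y = (z : ℝ) / 2 := by rw [hy, hz]; field_simp
  have hfl := Int.floor_le y
  have hfl2 := Int.lt_floor_add_one y
  have hzz : (z : ℝ) < 2 * (⌊y⌋ : ℝ) + 2 := by linarith
  have hzz' : z ≤ 2 * ⌊y⌋ + 1 := by
    have : z < 2 * ⌊y⌋ + 2 := by exact_mod_cast hzz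
    omega
  have hzr : (z : ℝ) ≤ 2 * (⌊y⌋ : ℝ) + 1 := by exact_mod_cast hzz'
  have hui := hu i
  have hpc : parentCorner o c s i = o i + 2 * s * (⌊y⌋ : ℝ) := rfl
  have h2sy : 2 * s * y = c i - o i := by rw [hy]; field_simp
  constructor
  · rw [hpc]
    have : 2 * s * (⌊y⌋ : ℝ) ≤ 2 * s * y :=
      mul_le_mul_of_nonneg_left hfl h2s.le
    linarith [hui.1]
  · rw [hpc]
    have hcz : c i = o i + (z : ℝ) * s := by linarith [hz]
    nlinarith [hui.2, hs.le]

lemma parentCorner_shift (o o' c : Fin n → ℝ) {s : ℝ} (hs : 0 < s)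
    (h : ∀ i, ∃ m : ℤ, o i - o' i = m * (2 * s)) :
    parentCorner o c s = parentCorner o' c s := by
  funext i
  obtain ⟨m, hm⟩ := h i
  unfold parentCorner
  have h2s : (2 * s) ≠ 0 := by positivity
  have hdiv : (c i - o' i) / (2 * s) = (c i - o i) / (2 * s) + (m : ℝ) := by
    field_simp
    linarith [hm]
  rw [hdiv, Int.floor_add_intCast]
  push_cast
  linear_combination hm

lemma delta_lower {E : Set (Fin n → ℝ)} (hEne : E.Nonempty) {x c : Fin n → ℝ}
    {s t : ℝ} (hs : 0 < s) (ht0 : 0 ≤ t)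
    (hdist : s * Real.sqrt n ≤ setDist2 (cube c s) E)
    (hxs : x ∈ cubeStar t c s) :
    (1 - t) * (s * Real.sqrt n) ≤ setDist2 {x} E := by
  refine le_setDist2 (Set.singleton_nonempty x) hEne ?_
  rintro a ha e he
  rw [Set.mem_singleton_iff] at ha
  rw [ha]
  set p : Fin n → ℝ := fun i => max (c i) (min (x i) (c i + s)) with hp
  have hpQ : p ∈ cube c s := fun i =>
    ⟨le_max_left _ _, max_le (by linarith) (min_le_right _ _)⟩
  have hts : 0 ≤ t * s := by positivity
  have hxp : edist2 x p ≤ (t * s) * Real.sqrt n := by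
    refine edist2_le_coord hts fun i => ?_
    have h := abs_le.1 (hxs i)
    have h1 : c i - t * s ≤ x i := by linarith [h.1]
    have h2 : x i ≤ c i + s + t * s := by linarith [h.2]
    have hpi : p i = max (c i) (min (x i) (c i + s)) := rfl
    rw [abs_le]; constructor
    · have hub : p i ≤ x i + t * s := by
        rw [hpi]
        exact max_le (by linarith) (le_trans (min_le_left _ _) (by linarith))
      linarith
    · have hlb : x i - t * s ≤ p i := by
        rw [hpi]
        exact le_trans (le_min (by linarith) (by linarith)) (le_max_right _ _)
      linarith
  have h1 : s * Real.sqrt n ≤ edist2 p e := le_trans hdist (setDist2_le hpQ he)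
  have h2 : edist2 p e ≤ edist2 p x + edist2 x e := edist2_triangle p x e
  have h3 : edist2 p x = edist2 x p := edist2_comm p x
  nlinarith

lemma delta_upper {E : Set (Fin n → ℝ)} (hEne : E.Nonempty) {x : Fin n → ℝ}
    (o : Fin n → ℝ) {c : Fin n → ℝ} {s : ℝ}
    (hq : IsWhitneyAt E o (c, s)) (hs : 0 < s) (hx : x ∈ cube c s) :
    setDist2 {x} E < 4 * (s * Real.sqrt n) := by
  obtain ⟨⟨hj, hz⟩, h1, h2⟩ := hq
  have hsub := cube_subset_parent o hs hz
  have hxp : x ∈ cube (parentCorner o c s) (2 * s) := hsub hx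
  obtain ⟨a, ha, e, he, hae⟩ :=
    exists_of_setDist2_lt ⟨x, hxp⟩ hEne h2
  have hd1 : setDist2 {x} E ≤ edist2 x e := setDist2_le rfl he
  have hd2 : edist2 x e ≤ edist2 x a + edist2 a e := edist2_triangle x a e
  have hd3 : edist2 x a ≤ (2 * s) * Real.sqrt n :=
    edist2_le_of_mem_cube (by linarith) hxp ha
  nlinarith

lemma star_of_phi {t : ℝ} {ϑ : ℝ → ℝ}
    (hϑ0 : ∀ y : ℝ, y ∉ Set.Ioo (-t) (1 + t) → ϑ y = 0)
    {x c : Fin n → ℝ} {s : ℝ} (hs : 0 < s)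
    (h : phiC ϑ c s x ≠ 0) : x ∈ cubeStar t c s := by
  intro i
  have hi : ϑ ((x i - c i) / s) ≠ 0 := by
    intro h0
    exact h (Finset.prod_eq_zero (Finset.mem_univ i) h0)
  have hmem : (x i - c i) / s ∈ Set.Ioo (-t) (1 + t) := by
    by_contra hcon; exact hi (hϑ0 _ hcon)
  obtain ⟨l, r⟩ := hmem
  have l' : -t * s < x i - c i := (lt_div_iff₀ hs).mp l
  have r' : x i - c i < (1 + t) * s := (div_lt_iff₀ hs).mp r
  rw [abs_le]; constructor <;> nlinarith

end helpers

lemma whitney_transfer {n : ℕ} (hn : 0 < n) {t : ℝ} (ht : t ∈ Set.Ioo (0:ℝ) (1/4))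
    {E : Set (Fin n → ℝ)} (hEne : E.Nonempty) {x : Fin n → ℝ}
    {b₀ : Fin n → ℝ} {s₀ : ℝ}
    (hQ₀ : IsWhitneyAt E (fun _ => 0) (b₀, s₀)) (hxQ₀ : x ∈ cube b₀ s₀)
    {b b' : Fin n → ℝ} (hbb' : ∃ z : Fin n → ℤ, ∀ i, b i - b' i = 16 * s₀ * z i)
    {q : (Fin n → ℝ) × ℝ} (hq : IsWhitneyAt E b q)
    (hxq : x ∈ cubeStar t q.1 q.2) : IsWhitneyAt E b' q := by
  obtain ⟨j₀, hs₀'⟩ := hQ₀.1.1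
  have hs₀ : s₀ = 2 ^ j₀ := hs₀'
  have hs₀pos : 0 < s₀ := by rw [hs₀]; positivity
  obtain ⟨⟨⟨j, hsj⟩, hdy⟩, hd1, hd2⟩ := hq
  have hs : 0 < q.2 := by rw [hsj]; positivity
  have SNpos : 0 < Real.sqrt n := Real.sqrt_pos.mpr (by exact_mod_cast hn)
  have hlow : (1 - t) * (q.2 * Real.sqrt n) ≤ setDist2 {x} E :=
    delta_lower hEne hs ht.1.le hd1 hxq
  have hup : setDist2 {x} E < 4 * (s₀ * Real.sqrt n) :=
    delta_upper hEne (fun _ => 0) hQ₀ hs₀pos hxQ₀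
  have h1 : (1 - t) * (q.2 * Real.sqrt n) < 4 * (s₀ * Real.sqrt n) :=
    lt_of_le_of_lt hlow hup
  have h2 : (1 - t) * q.2 < 4 * s₀ := by nlinarith
  have h3 : q.2 < 8 * s₀ := by nlinarith [ht.2, hs]
  have hj2 : j ≤ j₀ + 2 := by
    have hpow : (2:ℝ) ^ j < 2 ^ (j₀ + 3) := by
      rw [zpow_add₀ (by norm_num : (2:ℝ) ≠ 0)]
      rw [hsj, hs₀] at h3
      calc (2:ℝ) ^ j < 8 * 2 ^ j₀ := h3
        _ = 2 ^ j₀ * 2 ^ (3:ℤ) := by norm_num; ring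
    have := (zpow_lt_zpow_iff_right₀ (by norm_num : (1:ℝ) < 2)).1 hpow
    omega
  set K : ℕ := (j₀ + 4 - j).toNat with hKdef
  have hK : (K : ℤ) = j₀ + 4 - j := Int.toNat_of_nonneg (by omega)
  have hK2 : 2 ≤ K := by omega
  have h16 : 16 * s₀ = 2 ^ K * q.2 := by
    rw [hs₀, hsj, show ((2:ℝ) ^ K) = (2:ℝ) ^ ((K : ℤ)) from (zpow_natCast _ _).symm,
      hK, ← zpow_add₀ (by norm_num : (2:ℝ) ≠ 0)]
    rw [show j₀ + 4 - j + j = j₀ + 4 by ring, zpow_add₀ (by norm_num : (2:ℝ) ≠ 0)]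
    norm_num; ring
  obtain ⟨w, hw⟩ := hbb'
  have hshift1 : ∀ i, ∃ m : ℤ, b i - b' i = m * q.2 := fun i =>
    ⟨2 ^ K * w i, by rw [hw i, h16]; push_cast; ring⟩
  have hshift2 : ∀ i, ∃ m : ℤ, b i - b' i = m * (2 * q.2) := fun i => by
    refine ⟨2 ^ (K - 1) * w i, ?_⟩
    rw [hw i, h16]
    have h2K : (2:ℝ) ^ K = 2 * 2 ^ (K - 1) := by
      rw [← pow_succ']
      congr 1
      omega
    rw [h2K]; push_cast; ring
  refine ⟨⟨⟨j, hsj⟩, fun i => ?_⟩, hd1, ?_⟩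
  · obtain ⟨z, hz⟩ := hdy i
    obtain ⟨mm, hm⟩ := hshift1 i
    refine ⟨z + mm, ?_⟩
    push_cast
    linear_combination hz + hm
  · rwa [← parentCorner_shift b b' q.1 hs hshift2]

/-- Periodicity of `b ↦ 𝓔_{m,[b]}(f)(x)`: if `s₀` is the side of a Whitney cube
(standard origin) containing `x ∈ Eᶜ` and `b - b' ∈ 16 s₀ ℤⁿ`, then the Whitney
cubes `Q` with respect to origin `b` satisfying `x ∈ Q^*` coincide with those with
respect to `b'`, and hence `𝓔_{m,[b]}(f)(x) = 𝓔_{m,[b']}(f)(x)`. -/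
theorem stmt_19 (n m : ℕ) (hn : 0 < n) (t : ℝ) (ht : t ∈ Set.Ioo (0:ℝ) (1/4))
    (E : Set (Fin n → ℝ)) (hE : IsCompact E) (hEne : E.Nonempty)
    (x : Fin n → ℝ) (hx : x ∈ Eᶜ)
    (b₀ : Fin n → ℝ) (s₀ : ℝ)
    (hQ₀ : IsWhitneyAt E (fun _ => 0) (b₀, s₀)) (hxQ₀ : x ∈ cube b₀ s₀)
    (b b' : Fin n → ℝ) (hbb' : ∃ z : Fin n → ℤ, ∀ i, b i - b' i = 16 * s₀ * z i)
    (ϑ : ℝ → ℝ)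
    (hϑ01 : ∀ y : ℝ, 0 ≤ ϑ y ∧ ϑ y ≤ 1)
    (hϑ1 : ∀ y ∈ Set.Icc (0:ℝ) 1, ϑ y = 1)
    (hϑ0 : ∀ y : ℝ, y ∉ Set.Ioo (-t) (1 + t) → ϑ y = 0)
    (W : (Fin n → ℝ) → (Fin n → ℕ) → ℝ)
    (pt : (Fin n → ℝ) × ℝ → Fin n → ℝ)
    (hpt : ∀ q : (Fin n → ℝ) × ℝ, pt q ∈ E ∧
      setDist2 (cube q.1 q.2) {pt q} = setDist2 (cube q.1 q.2) E) :
    {q : (Fin n → ℝ) × ℝ | IsWhitneyAt E b q ∧ x ∈ cubeStar t q.1 q.2}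
      = {q : (Fin n → ℝ) × ℝ | IsWhitneyAt E b' q ∧ x ∈ cubeStar t q.1 q.2} ∧
    extVal m E t ϑ W pt b x = extVal m E t ϑ W pt b' x := by
  have hs₀pos : 0 < s₀ := by
    obtain ⟨j₀, h⟩ := hQ₀.1.1
    have h' : s₀ = 2 ^ j₀ := h
    rw [h']; positivity
  have hbb'' : ∃ z : Fin n → ℤ, ∀ i, b' i - b i = 16 * s₀ * z i := by
    obtain ⟨z, hz⟩ := hbb'
    exact ⟨fun i => -z i, fun i => by push_cast; linarith [hz i]⟩
  have T1 : ∀ q, IsWhitneyAt E b q → x ∈ cubeStar t q.1 q.2 → IsWhitneyAt E b' q :=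
    fun q h1 h2 => whitney_transfer hn ht hEne hQ₀ hxQ₀ hbb' h1 h2
  have T2 : ∀ q, IsWhitneyAt E b' q → x ∈ cubeStar t q.1 q.2 → IsWhitneyAt E b q :=
    fun q h1 h2 => whitney_transfer hn ht hEne hQ₀ hxQ₀ hbb'' h1 h2
  have hspos : ∀ {o : Fin n → ℝ} {q : (Fin n → ℝ) × ℝ},
      IsWhitneyAt E o q → 0 < q.2 := by
    intro o q h
    obtain ⟨j, hj⟩ := h.1.1; rw [hj]; positivity
  have hsetS : {q : (Fin n → ℝ) × ℝ | IsWhitneyAt E b q ∧ x ∈ cubeStar t q.1 q.2}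
      = {q : (Fin n → ℝ) × ℝ | IsWhitneyAt E b' q ∧ x ∈ cubeStar t q.1 q.2} :=
    Set.ext fun q => ⟨fun ⟨h1, h2⟩ => ⟨T1 q h1 h2, h2⟩,
      fun ⟨h1, h2⟩ => ⟨T2 q h1 h2, h2⟩⟩
  refine ⟨hsetS, ?_⟩
  have hD : (∑ᶠ q' ∈ {q' : (Fin n → ℝ) × ℝ | IsWhitneyAt E b q'}, phiC ϑ q'.1 q'.2 x)
      = ∑ᶠ q' ∈ {q' : (Fin n → ℝ) × ℝ | IsWhitneyAt E b' q'}, phiC ϑ q'.1 q'.2 x := by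
    refine finsum_mem_inter_support_eq' _ _ _ fun q hq => ?_
    rw [Function.mem_support] at hq
    simp only [Set.mem_setOf_eq]
    constructor
    · intro h1; exact T1 q h1 (star_of_phi hϑ0 (hspos h1) hq)
    · intro h1; exact T2 q h1 (star_of_phi hϑ0 (hspos h1) hq)
  unfold extVal
  simp only [hD]
  refine finsum_mem_inter_support_eq' _ _ _ fun q hq => ?_
  rw [Function.mem_support] at hq
  have hphi : phiC ϑ q.1 q.2 x ≠ 0 := fun h0 => hq (by rw [h0]; simp)
  simp only [Set.mem_setOf_eq]
  constructor
  · rintro ⟨h1, hle⟩; exact ⟨T1 q h1 (star_of_phi hϑ0 (hspos h1) hphi), hle⟩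
  · rintro ⟨h1, hle⟩; exact ⟨T2 q h1 (star_of_phi hϑ0 (hspos h1) hphi), hle⟩
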